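/- Let M be the 4×4 real symmetric matrix with rows (2/3, 0, 1/2, 0), (0, 2/3, 0, 1/2), (1/2, 0, 1/8, 0), (0, 1/2, 0, 1/8), so that with n_A = n_B = 1 its blocks are M_AA = (2/3)I_2, M_AB = M_BA = (1/2)I_2, M_BB = (1/8)I_2, and |M_AB| = |M_BA| = (1/2)I_2. Then: (i) every complex eigenvalue of J_1·(M_AA + |M_AB|) = J_1·(7/6)I_2 has modulus 7/6 > 1, so the hypothesis of the second (modulus) separability criterion fails for M; (ii) there exists ε > 0 (for instance ε = 13/21) such that every complex eigenvalue of J_1·(M_AA + (ε/2)I_2) has modulus ≤ 1 and every complex eigenvalue of J_1·(M_BB + (1/(2ε))I_2) has modulus ≤ 1, so the hypothesis of the ε-scaled separability criterion holds for M. Hence the second criterion is sufficient but not necessary. -/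

import Mathlib

open Matrix

noncomputable section

/-- The standard `2×2` symplectic matrix `J_1 = [[0, 1], [-1, 0]]`. -/
def J1 : Matrix (Fin 2) (Fin 2) ℝ := !![0, 1; -1, 0]

/-- `μ ∈ ℂ` is an eigenvalue of the real `2×2` matrix `N`. -/
def IsEigenvalue2 (N : Matrix (Fin 2) (Fin 2) ℝ) (μ : ℂ) : Prop :=
  (N.map Complex.ofReal - μ • 1).det = 0

/-- The block `M_AA = (2/3)I_2` of the example. -/
def exMAA : Matrix (Fin 2) (Fin 2) ℝ := (2/3 : ℝ) • 1

/-- The block `M_AB = M_BA = (1/2)I_2` of the example. -/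
def exMAB : Matrix (Fin 2) (Fin 2) ℝ := (1/2 : ℝ) • 1

/-- The block `M_BB = (1/8)I_2` of the example. -/
def exMBB : Matrix (Fin 2) (Fin 2) ℝ := (1/8 : ℝ) • 1

lemma eig_iff (c : ℝ) (μ : ℂ) :
    IsEigenvalue2 (J1 * (c • 1)) μ ↔ μ ^ 2 + (c : ℂ) ^ 2 = 0 := by
  have h1 : J1 * (c • 1) = !![0, c; -c, 0] := by
    ext i j
    fin_cases i <;> fin_cases j <;>
      simp [J1, Matrix.mul_apply, Fin.sum_univ_two, Matrix.diagonal]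
  rw [IsEigenvalue2, h1]
  have h2 : ((!![0, c; -c, 0] : Matrix (Fin 2) (Fin 2) ℝ).map Complex.ofReal - μ • 1)
      = !![-μ, (c : ℂ); -(c : ℂ), -μ] := by
    ext i j
    fin_cases i <;> fin_cases j <;>
      simp [Matrix.map_apply, Matrix.one_apply]
  rw [h2, Matrix.det_fin_two_of]
  constructor <;> intro h <;> linear_combination h

lemma eig_abs {c : ℝ} {μ : ℂ} (h : IsEigenvalue2 (J1 * (c • 1)) μ) :
    ‖μ‖ = |c| := by
  rw [eig_iff] at h
  have h2 : μ ^ 2 = -(c : ℂ) ^ 2 := by linear_combination h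
  have h3 : ‖μ‖ ^ 2 = |c| ^ 2 := by
    have := congrArg (‖·‖) h2
    simpa [norm_pow, Complex.norm_real] using this
  exact (sq_eq_sq₀ (norm_nonneg μ) (abs_nonneg c)).mp h3

lemma eig_exists (c : ℝ) : IsEigenvalue2 (J1 * (c • 1)) (c * Complex.I) := by
  rw [eig_iff]
  have : Complex.I ^ 2 = -1 := Complex.I_sq
  ring_nf
  rw [this]
  ring

/-- for the example `M` with blocks `M_AA = (2/3)I_2`,
`M_AB = M_BA = (1/2)I_2`, `M_BB = (1/8)I_2`, one has `|M_AB| = |M_BA| = (1/2)I_2`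
(the positive semidefinite square root of `M_AB M_ABᵀ`); moreover (i) every complex
eigenvalue of `J_1·(M_AA + |M_AB|)` has modulus `7/6 > 1`, so the hypothesis of the second
(modulus) separability criterion fails, while (ii) there exists `ε > 0` (e.g. `ε = 13/21`)
such that every complex eigenvalue of `J_1·(M_AA + (ε/2)I_2)` has modulus `≤ 1` and every
complex eigenvalue of `J_1·(M_BB + (1/(2ε))I_2)` has modulus `≤ 1`, so the hypothesis of
the ε-scaled criterion holds.  Hence the second criterion is not necessary. -/
theorem statement19 :
    -- |M_AB| = (1/2)I_2: it is PSD and squares to M_AB · M_ABᵀ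
    (exMAB.PosSemidef ∧ exMAB * exMAB = exMAB * exMABᵀ) ∧
    -- (i) the second criterion fails for M
    ((∀ μ : ℂ, IsEigenvalue2 (J1 * (exMAA + exMAB)) μ → ‖μ‖ = 7/6) ∧
      (1 : ℝ) < 7/6 ∧
      ¬ (∀ μ : ℂ, IsEigenvalue2 (J1 * (exMAA + exMAB)) μ → ‖μ‖ ≤ 1)) ∧
    -- (ii) the ε-scaled criterion holds for M
    (∃ ε : ℝ, 0 < ε ∧
      (∀ μ : ℂ, IsEigenvalue2 (J1 * (exMAA + (ε/2 : ℝ) • 1)) μ → ‖μ‖ ≤ 1) ∧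
      (∀ μ : ℂ, IsEigenvalue2 (J1 * (exMBB + (1/(2*ε) : ℝ) • 1)) μ → ‖μ‖ ≤ 1)) := by
  have hAA : exMAA + exMAB = ((7/6 : ℝ)) • (1 : Matrix (Fin 2) (Fin 2) ℝ) := by
    rw [exMAA, exMAB, ← add_smul]; norm_num
  refine ⟨⟨?_, ?_⟩, ⟨?_, by norm_num, ?_⟩, ?_⟩
  · exact by
      rw [exMAB, Matrix.smul_one_eq_diagonal]
      exact Matrix.posSemidef_diagonal_iff.mpr fun i => by norm_num
  · rw [exMAB, Matrix.transpose_smul, Matrix.transpose_one]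
  · intro μ h
    rw [hAA] at h
    rw [eig_abs h]; norm_num
  · intro h
    have := h ((7/6 : ℝ) * Complex.I) (by rw [hAA]; exact eig_exists _)
    simp [Complex.norm_real] at this
    norm_num at this
  · refine ⟨13/21, by norm_num, ?_, ?_⟩
    · intro μ h
      have hr : exMAA + ((13/21)/2 : ℝ) • (1 : Matrix (Fin 2) (Fin 2) ℝ) = (41/42 : ℝ) • 1 := by
        rw [exMAA, ← add_smul]; norm_num
      rw [hr] at h
      rw [eig_abs h, abs_of_nonneg (by norm_num)]; norm_num
    · intro μ h
      have hr : exMBB + (1/(2*(13/21)) : ℝ) • (1 : Matrix (Fin 2) (Fin 2) ℝ) = (97/104 : ℝ) • 1 := by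
        rw [exMBB, ← add_smul]; norm_num
      rw [hr] at h
      rw [eig_abs h, abs_of_nonneg (by norm_num)]; norm_num
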